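/- Farkas lemma for the PSD cone: given symmetric matrices A^0, A^1, ..., A^m of order N, exactly one of the following holds: (1) there exists x ∈ R^m with A^0 + x_1 A^1 + ... + x_m A^m positive definite; (2) there exists a nonzero positive semidefinite Y with trace(A^0 Y) ≤ 0 and trace(A^i Y) = 0 for all i = 1,...,m. -/

import Mathlib

/-!
If no `A⁰ + ∑ xᵢ Aⁱ` is positive definite, the affine space `A⁰ + span {Aⁱ}` misses the open
convex cone of matrices `M` with `xᵀ M x > 0` for all `x ≠ 0`. Hahn–Banach separates the two by a
functional `f` that is nonnegative on the closure of the cone, vanishes on `span {Aⁱ}` and has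
`f A⁰ ≤ 0`, `f A⁰ < f 1`. On symmetric matrices `f` is `M ↦ trace (M Y)` for a symmetric `Y`, and
nonnegativity on the rank-one matrices `x xᵀ` makes `Y` positive semidefinite. Conversely
`trace (P Y) > 0` whenever `P ≻ 0` and `0 ≠ Y ⪰ 0`, so the two alternatives exclude each other.
-/

open Matrix Filter Topology

theorem le_zero_and_nonneg_of_forall_pos_lt_mul {b c : ℝ} (h : ∀ r : ℝ, 0 < r → c < r * b) :
    c ≤ 0 ∧ 0 ≤ b := by
  have hc : c ≤ 0 := by
    have hlim : Tendsto (fun r : ℝ => r * b) (𝓝[>] 0) (𝓝 0) :=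
      ((continuous_mul_const b).tendsto' 0 0 (zero_mul b)).mono_left nhdsWithin_le_nhds
    exact ge_of_tendsto hlim (eventually_nhdsWithin_of_forall fun r hr => (h r hr).le)
  refine ⟨hc, not_lt.mp fun hb => ?_⟩
  have := h ((1 - c) / -b) (div_pos (by linarith) (by linarith))
  rw [div_neg, neg_mul, div_mul_cancel₀ _ hb.ne] at this
  linarith

theorem eq_zero_of_forall_add_mul_le {b c d : ℝ} (h : ∀ r : ℝ, c + r * b ≤ d) : b = 0 := by
  by_contra hb
  have := h ((d - c + 1) / b)
  rw [div_mul_cancel₀ _ hb] at this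
  linarith

theorem IsCompact.isOpen_setOf_forall_pos {X Y : Type*} [TopologicalSpace X]
    [TopologicalSpace Y] {K : Set Y} (hK : IsCompact K) {F : X × Y → ℝ} (hF : Continuous F) :
    IsOpen {x | ∀ y ∈ K, 0 < F (x, y)} :=
  isOpen_iff_eventually.mpr fun _ hx => hK.eventually_forall_of_forall_eventually fun y hy =>
    continuousAt_const.eventually_lt hF.continuousAt (hx y hy)

theorem ConvexCone.exists_dual_separating_affine_of_isOpen {E : Type*} [AddCommGroup E]
    [Module ℝ E] [TopologicalSpace E] [IsTopologicalAddGroup E] [ContinuousSMul ℝ E]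
    (C : ConvexCone ℝ E) (hCo : IsOpen (C : Set E)) (hCne : (C : Set E).Nonempty)
    (V : Submodule ℝ E) (a : E) (hdisj : ∀ w ∈ V, a + w ∉ C) :
    ∃ f : StrongDual ℝ E, (∀ y ∈ closure (C : Set E), 0 ≤ f y) ∧ (∀ y ∈ C, f a < f y) ∧
      f a ≤ 0 ∧ ∀ w ∈ V, f w = 0 := by
  obtain ⟨g, u, hgC, hgV⟩ := geometric_hahn_banach_open C.convex hCo (V.convex.translate a)
    (Set.disjoint_left.mpr fun _ hy ⟨w, hw, hwy⟩ => hdisj w hw (by rwa [← hwy] at hy))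
  have hV : ∀ w ∈ V, -g (a + w) ≤ -u := fun w hw => neg_le_neg (hgV _ ⟨w, hw, rfl⟩)
  have ha : -g a ≤ -u := by simpa using hV 0 V.zero_mem
  have hC : ∀ y ∈ C, -g a < -g y := fun y hy => ha.trans_lt (neg_lt_neg (hgC y hy))
  have hcone : ∀ y ∈ C, -g a ≤ 0 ∧ 0 ≤ -g y := fun y hy =>
    le_zero_and_nonneg_of_forall_pos_lt_mul fun r hr => by
      simpa using hC _ (C.smul_mem hr hy)
  obtain ⟨y₀, hy₀⟩ := hCne
  refine ⟨-g, fun y hy => ?_, hC, (hcone y₀ hy₀).1, fun w hw => ?_⟩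
  · exact closure_minimal (fun y hy => (hcone y hy).2)
      (isClosed_le continuous_const (-g).continuous) hy
  · exact eq_zero_of_forall_add_mul_le fun r => by
      simpa using hV _ (V.smul_mem r hw)

namespace Matrix

variable {n : Type*}

theorem isSymm_sum {α ι : Type*} [AddCommMonoid α] (s : Finset ι) {A : ι → Matrix n n α}
    (h : ∀ i ∈ s, (A i).IsSymm) : (∑ i ∈ s, A i).IsSymm := by
  rw [IsSymm, transpose_sum]
  exact Finset.sum_congr rfl fun i hi => (h i hi).eq

variable [Fintype n]

theorem trace_mul_vecMulVec_self {α : Type*} [CommSemiring α] (M : Matrix n n α) (x : n → α) :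
    (M * vecMulVec x x).trace = x ⬝ᵥ M *ᵥ x := by
  rw [mul_vecMulVec, trace_vecMulVec, dotProduct_comm]

theorem PosDef.trace_mul_pos {P Y : Matrix n n ℝ} (hP : P.PosDef) (hY : Y.PosSemidef)
    (hY0 : Y ≠ 0) : 0 < (P * Y).trace := by
  obtain ⟨k, v, rfl⟩ := posSemidef_iff_eq_sum_vecMulVec.mp hY
  obtain ⟨i, hi⟩ : ∃ i, v i ≠ 0 := by
    by_contra! h
    simp [h] at hY0
  simp only [star_trivial, Finset.mul_sum, trace_sum, trace_mul_vecMulVec_self]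
  refine Finset.sum_pos' (fun j _ => ?_) ⟨i, Finset.mem_univ i, ?_⟩
  · simpa using hP.posSemidef.dotProduct_mulVec_nonneg (v j)
  · simpa using hP.dotProduct_mulVec_pos hi

variable (n) in
/-- No symmetry is imposed, so that the cone is open in the space of all matrices. -/
def posQuadCone : ConvexCone ℝ (Matrix n n ℝ) where
  carrier := {M | ∀ x, x ≠ 0 → 0 < x ⬝ᵥ M *ᵥ x}
  smul_mem' c hc M hM x hx := by
    rw [smul_mulVec, dotProduct_smul, smul_eq_mul]
    exact mul_pos hc (hM x hx)
  add_mem' M hM Q hQ x hx := by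
    rw [add_mulVec, dotProduct_add]
    exact add_pos (hM x hx) (hQ x hx)

theorem mem_posQuadCone {M : Matrix n n ℝ} :
    M ∈ posQuadCone n ↔ ∀ x, x ≠ 0 → 0 < x ⬝ᵥ M *ᵥ x :=
  Iff.rfl

theorem posDef_iff_isSymm_and_mem_posQuadCone {M : Matrix n n ℝ} :
    M.PosDef ↔ M.IsSymm ∧ M ∈ posQuadCone n := by
  simp [posDef_iff_dotProduct_mulVec, IsHermitian, IsSymm, mem_posQuadCone]

theorem PosDef.mem_posQuadCone {M : Matrix n n ℝ} (hM : M.PosDef) : M ∈ posQuadCone n :=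
  (posDef_iff_isSymm_and_mem_posQuadCone.mp hM).2

theorem posSemidef_iff_isSymm_and_dotProduct_mulVec_nonneg {M : Matrix n n ℝ} :
    M.PosSemidef ↔ M.IsSymm ∧ ∀ x, 0 ≤ x ⬝ᵥ M *ᵥ x := by
  simp [posSemidef_iff_dotProduct_mulVec, IsHermitian, IsSymm]

theorem coe_posQuadCone_eq_sphere :
    (posQuadCone n : Set (Matrix n n ℝ)) =
      {M | ∀ x ∈ Metric.sphere (0 : n → ℝ) 1, 0 < x ⬝ᵥ M *ᵥ x} := by
  ext M
  refine ⟨fun hM x hx => hM x (ne_zero_of_mem_unit_sphere ⟨x, hx⟩), fun hM x hx => ?_⟩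
  have hunit : ‖x‖⁻¹ • x ∈ Metric.sphere (0 : n → ℝ) 1 := by
    rw [mem_sphere_zero_iff_norm, norm_smul, norm_inv, norm_norm,
      inv_mul_cancel₀ (norm_ne_zero_iff.mpr hx)]
  have hpos := hM _ hunit
  rw [mulVec_smul, dotProduct_smul, smul_dotProduct, smul_eq_mul, smul_eq_mul] at hpos
  have hinv : 0 < ‖x‖⁻¹ := by positivity
  exact (mul_pos_iff_of_pos_left hinv).mp ((mul_pos_iff_of_pos_left hinv).mp hpos)

theorem isOpen_posQuadCone : IsOpen (posQuadCone n : Set (Matrix n n ℝ)) := by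
  rw [coe_posQuadCone_eq_sphere]
  exact (isCompact_sphere 0 1).isOpen_setOf_forall_pos
    (F := fun p : Matrix n n ℝ × (n → ℝ) => p.2 ⬝ᵥ p.1 *ᵥ p.2) (by fun_prop)

theorem PosSemidef.mem_closure_posQuadCone [DecidableEq n] {M : Matrix n n ℝ}
    (hM : M.PosSemidef) : M ∈ closure (posQuadCone n : Set (Matrix n n ℝ)) := by
  have hlim : Tendsto (fun ε : ℝ => M + ε • 1) (𝓝[>] 0) (𝓝 M) :=
    ((continuous_const.add (continuous_id.smul continuous_const)).tendsto' 0 M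
      (by simp)).mono_left nhdsWithin_le_nhds
  refine mem_closure_of_tendsto hlim (eventually_nhdsWithin_of_forall fun ε hε => ?_)
  exact (PosDef.posSemidef_add hM (PosDef.one.smul hε)).mem_posQuadCone

theorem exists_trace_mul_eq {R : Type*} [CommSemiring R] [DecidableEq n]
    (f : Matrix n n R →ₗ[R] R) : ∃ Y : Matrix n n R, ∀ M, f M = (M * Y).trace := by
  refine ⟨of fun j i => f (single i j 1), fun M => ?_⟩
  conv_lhs => rw [matrix_eq_sum_single M]
  simp only [map_sum, trace, diag, mul_apply, of_apply]
  refine Finset.sum_congr rfl fun i _ => Finset.sum_congr rfl fun j _ => ?_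
  rw [← smul_eq_mul, ← map_smul, smul_single, smul_eq_mul, mul_one]

theorem exists_isSymm_trace_mul_eq [DecidableEq n] (f : Matrix n n ℝ →ₗ[ℝ] ℝ) :
    ∃ Z : Matrix n n ℝ, Z.IsSymm ∧ ∀ M, M.IsSymm → (M * Z).trace = f M := by
  obtain ⟨Y, hY⟩ := exists_trace_mul_eq f
  refine ⟨(2 : ℝ)⁻¹ • (Y + Yᵀ), (isSymm_add_transpose_self Y).smul _, fun M hM => ?_⟩
  have hYt : (M * Yᵀ).trace = (M * Y).trace := by
    rw [← trace_transpose, transpose_mul, transpose_transpose, hM.eq, trace_mul_comm]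
  rw [Matrix.mul_smul, trace_smul, mul_add, trace_add, hYt, ← hY, smul_eq_mul]
  ring

theorem not_posDef_add_sum_smul_of_posSemidef {ι : Type*} [Fintype ι] {A₀ Y : Matrix n n ℝ}
    {A : ι → Matrix n n ℝ} (hY : Y.PosSemidef) (hY0 : Y ≠ 0) (hA₀Y : (A₀ * Y).trace ≤ 0)
    (hAY : ∀ i, (A i * Y).trace = 0) (x : ι → ℝ) : ¬ (A₀ + ∑ i, x i • A i).PosDef := by
  intro hx
  have hpos := hx.trace_mul_pos hY hY0
  simp only [add_mul, trace_add, Finset.sum_mul, trace_sum, smul_mul, trace_smul, hAY,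
    smul_zero, Finset.sum_const_zero, add_zero] at hpos
  exact hA₀Y.not_gt hpos

theorem exists_posSemidef_of_forall_not_posDef_add_sum_smul [DecidableEq n] {ι : Type*}
    [Fintype ι] {A₀ : Matrix n n ℝ} {A : ι → Matrix n n ℝ} (hA₀ : A₀.IsSymm)
    (hA : ∀ i, (A i).IsSymm) (h : ∀ x : ι → ℝ, ¬ (A₀ + ∑ i, x i • A i).PosDef) :
    ∃ Y : Matrix n n ℝ, Y.PosSemidef ∧ Y ≠ 0 ∧ (A₀ * Y).trace ≤ 0 ∧
      ∀ i, (A i * Y).trace = 0 := by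
  have hdisj : ∀ w ∈ Submodule.span ℝ (Set.range A), A₀ + w ∉ posQuadCone n := by
    intro w hw hmem
    obtain ⟨x, rfl⟩ := (Submodule.mem_span_range_iff_exists_fun ℝ).mp hw
    have hsymm := hA₀.add (isSymm_sum Finset.univ fun i _ => (hA i).smul (x i))
    exact h x (posDef_iff_isSymm_and_mem_posQuadCone.mpr ⟨hsymm, hmem⟩)
  obtain ⟨f, hf_nonneg, hf_lt, hf_A₀, hf_span⟩ :=
    (posQuadCone n).exists_dual_separating_affine_of_isOpen isOpen_posQuadCone
      ⟨1, PosDef.one.mem_posQuadCone⟩ _ A₀ hdisj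
  obtain ⟨Y, hY, hfY⟩ := exists_isSymm_trace_mul_eq f.toLinearMap
  simp only [ContinuousLinearMap.coe_coe] at hfY
  refine ⟨Y, posSemidef_iff_isSymm_and_dotProduct_mulVec_nonneg.mpr ⟨hY, fun x => ?_⟩,
    ?_, ?_, fun i => ?_⟩
  · have hxx : (vecMulVec x x).PosSemidef := by simpa using posSemidef_vecMulVec_self_star x
    rw [← trace_mul_vecMulVec_self, trace_mul_comm,
      hfY _ (posSemidef_iff_isSymm_and_dotProduct_mulVec_nonneg.mp hxx).1]
    exact hf_nonneg _ hxx.mem_closure_posQuadCone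
  · rintro rfl
    have := hf_lt 1 PosDef.one.mem_posQuadCone
    rw [← hfY 1 isSymm_one, ← hfY A₀ hA₀] at this
    simp at this
  · rw [hfY A₀ hA₀]
    exact hf_A₀
  · rw [hfY _ (hA i)]
    exact hf_span _ (Submodule.subset_span ⟨i, rfl⟩)

end Matrix

theorem stmt12 (m N : ℕ) (A0 : Matrix (Fin N) (Fin N) ℝ) (hA0 : A0.IsSymm)
    (A : Fin m → Matrix (Fin N) (Fin N) ℝ) (hA : ∀ i, (A i).IsSymm) :
    Xor'
      (∃ x : Fin m → ℝ, (A0 + ∑ i, x i • A i).PosDef)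
      (∃ Y : Matrix (Fin N) (Fin N) ℝ, Y.PosSemidef ∧ Y ≠ 0 ∧
        (A0 * Y).trace ≤ 0 ∧ ∀ i, (A i * Y).trace = 0) := by
  by_cases hpd : ∃ x : Fin m → ℝ, (A0 + ∑ i, x i • A i).PosDef
  · refine Or.inl ⟨hpd, ?_⟩
    rintro ⟨Y, hY, hY0, hA0Y, hAY⟩
    obtain ⟨x, hx⟩ := hpd
    exact not_posDef_add_sum_smul_of_posSemidef hY hY0 hA0Y hAY x hx
  · exact Or.inr ⟨exists_posSemidef_of_forall_not_posDef_add_sum_smul hA0 hA (not_exists.mp hpd),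
      hpd⟩
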